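/- Totient-twisted exponential sum bound via an exponent-pair hypothesis: Let 0 ≤ k ≤ 1/2 ≤ ℓ ≤ 1 be real numbers and C₀ > 0 be such that for all real X > 0 and all integers M, M₁ with 1 ≤ M < M₁ ≤ 2M one has |∑_{M < m ≤ M₁} e(X/m)| ≤ C₀·((X/M)^k·M^{ℓ−k} + M²/X). Then there is a constant C > 0 (depending only on k, ℓ, C₀) such that for all integers N, N₁ with 2 ≤ N < N₁ ≤ 2N and all real x ≥ N, |∑_{N < n ≤ N₁} φ(n)·e(x/n)| ≤ C·(x^k·N^{1+ℓ−2k}·log N + N³/x + N). -/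

import Mathlib

open Finset Real

/-- `e(z) = exp(2πiz)`. -/
noncomputable def e (z : ℝ) : ℂ := Complex.exp (2 * Real.pi * Complex.I * z)

/-!
Since `φ = μ ∗ id`, the sum equals `∑_d μ(d) ∑_{N/d < m ≤ N₁/d} m e((x/d)/m)`. For `d ≤ N` the
inner range lies in `(M, 2M + 1]` with `M = ⌊N/d⌋`: partial summation removes the weight `m` at
the cost of a factor `≤ 2N/d`, and the exponent-pair estimate with `X = x/d` bounds every tail,
so the `d`-th term is `O((x^k N^(1+ℓ-2k) + N)/d + N³/(x d²))`. Summing over `d ≤ N` gives the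
`log N` and `N³/x` terms; each `d > N` contributes at most the single term `m = 1`, hence `O(N)`.
-/

open scoped ArithmeticFunction.Moebius Nat

lemma norm_e (z : ℝ) : ‖e z‖ = 1 := by
  rw [e, show 2 * π * Complex.I * z = ((2 * π * z : ℝ) : ℂ) * Complex.I by push_cast; ring]
  exact Complex.norm_exp_ofReal_mul_I _

lemma totient_eq_sum_moebius_mul {n : ℕ} (hn : 0 < n) :
    (φ n : ℂ) = ∑ p ∈ n.divisorsAntidiagonal, (μ p.1 : ℂ) * p.2 :=
  ((ArithmeticFunction.sum_eq_iff_sum_mul_moebius_eq (f := fun i => (φ i : ℂ))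
    (g := fun i => (i : ℂ))).mp (fun m _ => by rw [← Nat.cast_sum, Nat.sum_totient]) n hn).symm

lemma sum_Ioc_totient_mul (N N₁ : ℕ) (f : ℕ → ℂ) :
    ∑ n ∈ Ioc N N₁, (φ n : ℂ) * f n =
      ∑ d ∈ Ioc 0 N₁, (μ d : ℂ) * ∑ m ∈ Ioc (N / d) (N₁ / d), (m : ℂ) * f (d * m) := by
  have hmem {d m : ℕ} (hd : 0 < d) : N / d < m ∧ m ≤ N₁ / d ↔ N < d * m ∧ d * m ≤ N₁ := by
    rw [Nat.div_lt_iff_lt_mul hd, Nat.le_div_iff_mul_le hd, mul_comm m d]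
  calc ∑ n ∈ Ioc N N₁, (φ n : ℂ) * f n
      = ∑ n ∈ Ioc N N₁, ∑ p ∈ n.divisorsAntidiagonal, (μ p.1 : ℂ) * (p.2 * f (p.1 * p.2)) := by
        refine sum_congr rfl fun n hn => ?_
        rw [totient_eq_sum_moebius_mul (by simp at hn; omega), sum_mul]
        refine sum_congr rfl fun p hp => ?_
        rw [(Nat.mem_divisorsAntidiagonal.mp hp).1, mul_assoc]
    _ = ∑ d ∈ Ioc 0 N₁, ∑ m ∈ Ioc (N / d) (N₁ / d), (μ d : ℂ) * (m * f (d * m)) := by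
        rw [sum_sigma', sum_sigma']
        refine sum_nbij' (fun p => ⟨p.2.1, p.2.2⟩) (fun q => ⟨q.1 * q.2, (q.1, q.2)⟩)
          ?_ ?_ ?_ ?_ (fun _ _ => rfl)
        · rintro ⟨n, d, m⟩ h
          simp only [mem_sigma, mem_Ioc, Nat.mem_divisorsAntidiagonal] at h ⊢
          obtain ⟨hn, rfl, hne⟩ := h
          have hd : 0 < d := Nat.pos_of_ne_zero (left_ne_zero_of_mul hne)
          have hm : 0 < m := Nat.pos_of_ne_zero (right_ne_zero_of_mul hne)
          exact ⟨⟨hd, le_trans (Nat.le_mul_of_pos_right d hm) hn.2⟩, (hmem hd).2 hn⟩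
        · rintro ⟨d, m⟩ h
          simp only [mem_sigma, mem_Ioc, Nat.mem_divisorsAntidiagonal] at h ⊢
          have hdm := (hmem h.1.1).1 h.2
          exact ⟨hdm, trivial, by omega⟩
        · rintro ⟨n, d, m⟩ h
          simp only [mem_sigma, Nat.mem_divisorsAntidiagonal] at h
          obtain ⟨-, rfl, -⟩ := h
          rfl
        · rintro ⟨d, m⟩ -
          rfl
    _ = _ := by simp_rw [mul_sum]

lemma norm_sum_moebius_mul_le (s : Finset ℕ) (T : ℕ → ℂ) :
    ‖∑ d ∈ s, (μ d : ℂ) * T d‖ ≤ ∑ d ∈ s, ‖T d‖ := by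
  refine (norm_sum_le _ _).trans (sum_le_sum fun d _ => ?_)
  rw [norm_mul, Complex.norm_intCast]
  exact mul_le_of_le_one_left (norm_nonneg _)
    (by exact_mod_cast ArithmeticFunction.abs_moebius_le_one)

lemma sum_Ioc_natCast_mul_eq_sum_tails (M M₂ : ℕ) (f : ℕ → ℂ) :
    ∑ m ∈ Ioc M M₂, (m : ℂ) * f m = ∑ j ∈ Icc 1 M₂, ∑ m ∈ Ioc (max M (j - 1)) M₂, f m := by
  rw [sum_comm' (t' := Ioc M M₂) (s' := fun m => Icc 1 m)
    (fun j m => by simp only [mem_Ioc, mem_Icc]; omega)]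
  refine sum_congr rfl fun m _ => ?_
  simp

lemma norm_sum_Ioc_natCast_mul_le {f : ℕ → ℂ} {M M₂ : ℕ} {B : ℝ} (hB : 0 ≤ B)
    (h : ∀ M', M ≤ M' → M' < M₂ → ‖∑ m ∈ Ioc M' M₂, f m‖ ≤ B) :
    ‖∑ m ∈ Ioc M M₂, (m : ℂ) * f m‖ ≤ M₂ * B := by
  rw [sum_Ioc_natCast_mul_eq_sum_tails]
  calc _ ≤ ∑ j ∈ Icc 1 M₂, ‖∑ m ∈ Ioc (max M (j - 1)) M₂, f m‖ := norm_sum_le _ _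
    _ ≤ ∑ _j ∈ Icc 1 M₂, B := sum_le_sum fun j _ => ?_
    _ = M₂ * B := by simp
  rcases lt_or_ge (max M (j - 1)) M₂ with hlt | hge
  · exact h _ (le_max_left _ _) hlt
  · simpa [Ioc_eq_empty_of_le hge] using hB

lemma norm_sum_Ioc_natCast_mul_le_of_norm_le_one {f : ℕ → ℂ} (hf : ∀ m, ‖f m‖ ≤ 1) (a b : ℕ) :
    ‖∑ m ∈ Ioc a b, (m : ℂ) * f m‖ ≤ (b - a : ℕ) * b := by
  calc _ ≤ ∑ m ∈ Ioc a b, ‖(m : ℂ) * f m‖ := norm_sum_le _ _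
    _ ≤ (Ioc a b).card • (b : ℝ) := sum_le_card_nsmul _ _ _ fun m hm => ?_
    _ = (b - a : ℕ) * b := by simp
  rw [norm_mul, Complex.norm_natCast]
  exact (mul_le_of_le_one_right m.cast_nonneg (hf m)).trans (by exact_mod_cast (mem_Ioc.mp hm).2)

lemma sum_Ioc_norm_sum_Ioc_div_le_of_norm_le_one {f : ℕ → ℕ → ℂ} (hf : ∀ d m, ‖f d m‖ ≤ 1)
    {N N₁ : ℕ} (hN₁ : N₁ ≤ 2 * N) :
    ∑ d ∈ Ioc N N₁, ‖∑ m ∈ Ioc (N / d) (N₁ / d), (m : ℂ) * f d m‖ ≤ N := by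
  have hterm : ∀ d ∈ Ioc N N₁, ‖∑ m ∈ Ioc (N / d) (N₁ / d), (m : ℂ) * f d m‖ ≤ 1 := by
    intro d hd
    have hNd : N < d := (mem_Ioc.mp hd).1
    have hN₁d : N₁ / d ≤ 1 :=
      Nat.le_of_lt_succ ((Nat.div_lt_iff_lt_mul (by omega)).mpr (by omega))
    refine (norm_sum_Ioc_natCast_mul_le_of_norm_le_one (hf d) _ _).trans ?_
    rw [Nat.div_eq_of_lt hNd, Nat.sub_zero]
    exact_mod_cast (Nat.mul_le_mul hN₁d hN₁d : _ ≤ 1 * 1)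
  refine (sum_le_card_nsmul _ _ 1 hterm).trans ?_
  simp only [Nat.card_Ioc, nsmul_eq_mul, mul_one]
  exact_mod_cast (by omega : N₁ - N ≤ N)

lemma sum_Ioc_inv_le_three_mul_log {N : ℕ} (hN : 2 ≤ N) :
    ∑ d ∈ Ioc 0 N, (d : ℝ)⁻¹ ≤ 3 * log N := by
  have hharmonic : ∑ d ∈ Ioc 0 N, (d : ℝ)⁻¹ = harmonic N := by
    rw [harmonic_eq_sum_Icc, ← Icc_add_one_left_eq_Ioc]; push_cast; rfl
  have hlog : log 2 ≤ log N := log_le_log two_pos (by exact_mod_cast hN)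
  linarith [harmonic_le_one_add_log N, log_two_gt_d9]

lemma sum_Ioc_inv_sq_le_two (N : ℕ) : ∑ d ∈ Ioc 0 N, ((d : ℝ) ^ 2)⁻¹ ≤ 2 := by
  simpa [← Ioo_add_one_right_eq_Ioc] using sum_Ioo_inv_sq_le (α := ℝ) 0 (N + 1)

lemma sum_Ioc_div_add_div_sq_le {N : ℕ} (hN : 2 ≤ N) {a b : ℝ} (ha : 0 ≤ a) (hb : 0 ≤ b) :
    ∑ d ∈ Ioc 0 N, (a / d + b / d ^ 2) ≤ a * (3 * log N) + b * 2 := by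
  simp only [div_eq_mul_inv, sum_add_distrib, ← mul_sum]
  gcongr
  exacts [sum_Ioc_inv_le_three_mul_log hN, sum_Ioc_inv_sq_le_two N]

lemma le_rpow_mul_rpow {N x k ℓ : ℝ} (hN : 1 ≤ N) (hNx : N ≤ x) (hk : 0 ≤ k) (hkℓ : k ≤ ℓ) :
    N ≤ x ^ k * N ^ (1 + ℓ - 2 * k) :=
  calc N = N ^ k * N ^ (1 - k) := by rw [← rpow_add (by linarith)]; simp
    _ ≤ x ^ k * N ^ (1 + ℓ - 2 * k) :=
      mul_le_mul (rpow_le_rpow (by linarith) hNx hk)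
        (rpow_le_rpow_of_exponent_le hN (by linarith)) (by positivity)
        (rpow_nonneg (by linarith) k)

lemma two_mul_div_rpow_mul_rpow_mul {x N : ℝ} (hx : 0 < x) (hN : 0 < N) (k ℓ : ℝ) :
    2 * ((2 * x / N) ^ k * (2 * N) ^ (ℓ - k)) * N =
      2 ^ (ℓ + 1) * (x ^ k * N ^ (1 + ℓ - 2 * k)) := by
  have hpow2 : (2 : ℝ) ^ (ℓ + 1) = 2 * (2 ^ k * 2 ^ (ℓ - k)) := by
    rw [← rpow_add two_pos, rpow_add_one two_ne_zero]; ring_nf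
  have hpowN : N ^ (1 + ℓ - 2 * k) = N * N ^ (ℓ - k) / N ^ k := by
    rw [show 1 + ℓ - 2 * k = 1 + (ℓ - k) - k by ring, rpow_sub hN, rpow_add hN, rpow_one]
  rw [div_rpow (by positivity) hN.le, mul_rpow zero_le_two hx.le, mul_rpow zero_le_two hN.le,
    hpow2, hpowN]
  field_simp

def ExponentPairBound (k ℓ C₀ : ℝ) : Prop :=
  ∀ X : ℝ, 0 < X → ∀ M M₁ : ℕ, 1 ≤ M → M < M₁ → M₁ ≤ 2 * M →
    ‖∑ m ∈ Ioc M M₁, e (X / m)‖ ≤ C₀ * ((X / M) ^ k * (M : ℝ) ^ (ℓ - k) + (M : ℝ) ^ 2 / X)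

namespace ExponentPairBound

variable {k ℓ C₀ : ℝ}

lemma norm_sum_le_of_le_two_mul (h : ExponentPairBound k ℓ C₀) (hC₀ : 0 ≤ C₀) (hk : 0 ≤ k)
    (hkℓ : k ≤ ℓ) {X Y : ℝ} (hX : 0 < X) {M M₁ : ℕ} (hM : 1 ≤ M) (hMM₁ : M < M₁)
    (hM₁ : M₁ ≤ 2 * M) (hYM : Y ≤ 2 * M) (hMY : M ≤ 2 * Y) :
    ‖∑ m ∈ Ioc M M₁, e (X / m)‖ ≤
      C₀ * ((2 * X / Y) ^ k * (2 * Y) ^ (ℓ - k) + (2 * Y) ^ 2 / X) := by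
  have hM0 : (0 : ℝ) < M := by exact_mod_cast hM
  have hY : 0 < Y := by linarith
  refine (h X hX M M₁ hM hMM₁ hM₁).trans ?_
  gcongr C₀ * (?_ ^ k * ?_ ^ (ℓ - k) + ?_ ^ 2 / X)
  rw [div_le_div_iff₀ hM0 hY]
  nlinarith

lemma norm_sum_natCast_mul_le (h : ExponentPairBound k ℓ C₀) (hC₀ : 0 ≤ C₀) (hk : 0 ≤ k)
    (hkℓ : k ≤ ℓ) {X Y : ℝ} (hX : 0 < X) {M M₁ : ℕ} (hM : 1 ≤ M) (hMM₁ : M ≤ M₁)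
    (hM₁ : M₁ ≤ 2 * M + 1) (hMY : M ≤ Y) (hYM : Y ≤ 2 * M) :
    ‖∑ m ∈ Ioc M M₁, (m : ℂ) * e (X / m)‖ ≤
      2 * Y * (C₀ * ((2 * X / Y) ^ k * (2 * Y) ^ (ℓ - k) + (2 * Y) ^ 2 / X)) + 3 * Y := by
  have hM1 : (1 : ℝ) ≤ M := by exact_mod_cast hM
  have hB : 0 ≤ C₀ * ((2 * X / Y) ^ k * (2 * Y) ^ (ℓ - k) + (2 * Y) ^ 2 / X) := by
    have : 0 < Y := by linarith
    positivity
  -- `(M, M₂]` is dyadic, so every tail is covered by the exponent-pair estimate; `(M₂, M₁]`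
  -- has at most one term.
  set M₂ := min M₁ (2 * M)
  have hM₂M : M₂ ≤ 2 * M := min_le_right _ _
  rw [← sum_Ioc_consecutive _ (le_min hMM₁ (by omega)) (min_le_left _ (2 * M))]
  refine (norm_add_le _ _).trans (add_le_add ?_ ?_)
  · have hM₂Y : (M₂ : ℝ) ≤ 2 * Y := by
      have : (M₂ : ℝ) ≤ 2 * M := by exact_mod_cast hM₂M
      linarith
    refine (norm_sum_Ioc_natCast_mul_le hB fun M' hMM' hM'M₂ => ?_).trans (by gcongr)
    have hMM'R : (M : ℝ) ≤ M' := by exact_mod_cast hMM'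
    have hM'M : (M' : ℝ) + 1 ≤ 2 * M := by exact_mod_cast (by omega : M' + 1 ≤ 2 * M)
    exact h.norm_sum_le_of_le_two_mul hC₀ hk hkℓ hX (by omega) hM'M₂ (by omega)
      (by linarith) (by linarith)
  · refine (norm_sum_Ioc_natCast_mul_le_of_norm_le_one (fun m => (norm_e _).le) _ _).trans ?_
    have hcard : ((M₁ - M₂ : ℕ) : ℝ) ≤ 1 := by exact_mod_cast (by omega : M₁ - M₂ ≤ 1)
    have hM₁R : (M₁ : ℝ) ≤ 2 * M + 1 := by exact_mod_cast hM₁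
    nlinarith

lemma norm_sum_Ioc_div_le (h : ExponentPairBound k ℓ C₀) (hC₀ : 0 ≤ C₀) (hk : 0 ≤ k)
    (hkℓ : k ≤ ℓ) {N N₁ d : ℕ} (hNN₁ : N ≤ N₁) (hN₁ : N₁ ≤ 2 * N) (hd : 0 < d) (hdN : d ≤ N)
    {x : ℝ} (hx : 0 < x) :
    ‖∑ m ∈ Ioc (N / d) (N₁ / d), (m : ℂ) * e (x / (d * m : ℕ))‖ ≤
      (2 ^ (ℓ + 1) * C₀ * (x ^ k * (N : ℝ) ^ (1 + ℓ - 2 * k)) + 3 * N) / d +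
        8 * C₀ * (N ^ 3 / x) / d ^ 2 := by
  have hM : 1 ≤ N / d := (Nat.one_le_div_iff hd).mpr hdN
  have hNlt : N < N / d * d + d := Nat.lt_div_mul_add hd
  have hM₁ : N₁ / d ≤ 2 * (N / d) + 1 := by
    have hN₁d : N₁ / d * d < (2 * (N / d) + 2) * d := by
      nlinarith [Nat.div_mul_le_self N₁ d]
    have := Nat.lt_of_mul_lt_mul_right hN₁d
    omega
  have hdR : (0 : ℝ) < d := by exact_mod_cast hd
  have hNR : (0 : ℝ) < N := by exact_mod_cast hd.trans_le hdN
  have hYM : (N : ℝ) / d ≤ 2 * (N / d : ℕ) := by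
    have hMR : (1 : ℝ) ≤ (N / d : ℕ) := by exact_mod_cast hM
    have hNltR : (N : ℝ) < (N / d : ℕ) * d + d := by exact_mod_cast hNlt
    rw [div_le_iff₀ hdR]
    nlinarith
  have key := h.norm_sum_natCast_mul_le hC₀ hk hkℓ (div_pos hx hdR) hM
    (Nat.div_le_div_right hNN₁) hM₁ Nat.cast_div_le hYM
  simp_rw [Nat.cast_mul, ← div_div]
  refine key.trans ?_
  rw [show 2 * (x / d) / (N / d) = 2 * x / N by field_simp]
  have hpow : (2 * (N / d : ℝ)) ^ (ℓ - k) ≤ (2 * N) ^ (ℓ - k) := by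
    gcongr
    exact div_le_self hNR.le (by exact_mod_cast hd)
  calc 2 * (N / d) * (C₀ * ((2 * x / N) ^ k * (2 * (N / d)) ^ (ℓ - k)
          + (2 * (N / d)) ^ 2 / (x / d))) + 3 * (N / d)
      ≤ 2 * (N / d) * (C₀ * ((2 * x / N) ^ k * (2 * N) ^ (ℓ - k)
          + (2 * (N / d)) ^ 2 / (x / d))) + 3 * (N / d) := by gcongr
    _ = (C₀ * (2 * ((2 * x / N) ^ k * (2 * N) ^ (ℓ - k)) * N) + 3 * N) / d
        + 8 * C₀ * (N ^ 3 / x) / d ^ 2 := by field_simp; ring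
    _ = _ := by rw [two_mul_div_rpow_mul_rpow_mul hx hNR]; ring

lemma sum_Ioc_norm_sum_Ioc_div_le (h : ExponentPairBound k ℓ C₀) (hC₀ : 0 ≤ C₀) (hk : 0 ≤ k)
    (hkℓ : k ≤ ℓ) {N N₁ : ℕ} (hN : 2 ≤ N) (hNN₁ : N ≤ N₁) (hN₁ : N₁ ≤ 2 * N) {x : ℝ}
    (hx : 0 < x) :
    ∑ d ∈ Ioc 0 N, ‖∑ m ∈ Ioc (N / d) (N₁ / d), (m : ℂ) * e (x / (d * m : ℕ))‖ ≤
      (2 ^ (ℓ + 1) * C₀ * (x ^ k * (N : ℝ) ^ (1 + ℓ - 2 * k)) + 3 * N) * (3 * log N) +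
        8 * C₀ * (N ^ 3 / x) * 2 :=
  (sum_le_sum fun d hd => h.norm_sum_Ioc_div_le hC₀ hk hkℓ hNN₁ hN₁ (mem_Ioc.mp hd).1
    (mem_Ioc.mp hd).2 hx).trans (sum_Ioc_div_add_div_sq_le hN (by positivity) (by positivity))

end ExponentPairBound

theorem totient_twisted_exponential_sum_general (k ℓ C₀ : ℝ)
    (hk0 : 0 ≤ k) (hk : k ≤ 1 / 2) (hℓ : 1 / 2 ≤ ℓ) (hC₀ : 0 < C₀)
    (hyp : ∀ X : ℝ, 0 < X → ∀ M M₁ : ℕ, 1 ≤ M → M < M₁ → M₁ ≤ 2 * M →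
      ‖∑ m ∈ Finset.Ioc M M₁, e (X / m)‖ ≤
        C₀ * ((X / M) ^ k * (M : ℝ) ^ (ℓ - k) + (M : ℝ) ^ 2 / X)) :
    ∃ C : ℝ, 0 < C ∧ ∀ N N₁ : ℕ, 2 ≤ N → N < N₁ → N₁ ≤ 2 * N → ∀ x : ℝ, (N : ℝ) ≤ x →
      ‖∑ n ∈ Finset.Ioc N N₁, (Nat.totient n : ℂ) * e (x / n)‖ ≤
        C * (x ^ k * (N : ℝ) ^ (1 + ℓ - 2 * k) * Real.log N + (N : ℝ) ^ 3 / x + N) := by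
  have hkℓ : k ≤ ℓ := hk.trans hℓ
  refine ⟨3 * 2 ^ (ℓ + 1) * C₀ + 16 * C₀ + 10, by positivity,
    fun N N₁ hN hNN₁ hN₁ x hNx => ?_⟩
  have hN1 : (1 : ℝ) ≤ N := by exact_mod_cast (by omega : 1 ≤ N)
  have hx : 0 < x := by linarith
  have hNA := le_rpow_mul_rpow hN1 hNx hk0 hkℓ
  set A := x ^ k * (N : ℝ) ^ (1 + ℓ - 2 * k)
  set T : ℕ → ℂ := fun d => ∑ m ∈ Ioc (N / d) (N₁ / d), (m : ℂ) * e (x / (d * m : ℕ))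
  calc ‖∑ n ∈ Ioc N N₁, (φ n : ℂ) * e (x / n)‖
      ≤ ∑ d ∈ Ioc 0 N₁, ‖T d‖ := by
        rw [sum_Ioc_totient_mul]; exact norm_sum_moebius_mul_le _ _
    _ = ∑ d ∈ Ioc 0 N, ‖T d‖ + ∑ d ∈ Ioc N N₁, ‖T d‖ :=
        (sum_Ioc_consecutive _ (Nat.zero_le N) hNN₁.le).symm
    _ ≤ (2 ^ (ℓ + 1) * C₀ * A + 3 * N) * (3 * log N) + 8 * C₀ * (N ^ 3 / x) * 2 + N :=
        add_le_add (ExponentPairBound.sum_Ioc_norm_sum_Ioc_div_le hyp hC₀.le hk0 hkℓ hN hNN₁.le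
          hN₁ hx) (sum_Ioc_norm_sum_Ioc_div_le_of_norm_le_one (fun _ _ => (norm_e _).le) hN₁)
    _ ≤ _ := by
        have hlog : 0 ≤ log N := log_nonneg hN1
        have hA : 0 ≤ A := by linarith
        have hB : 0 ≤ (N : ℝ) ^ 3 / x := by positivity
        have hc : 0 ≤ 2 ^ (ℓ + 1) * C₀ := by positivity
        nlinarith [mul_le_mul_of_nonneg_right hNA hlog, mul_nonneg hc (add_nonneg hB hA),
          mul_nonneg hC₀.le (add_nonneg (mul_nonneg hA hlog) hA), mul_nonneg hA hlog]

/-- Totient-twisted exponential sum bound via an exponent-pair hypothesis. -/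
theorem totient_twisted_exponential_sum (k ℓ C₀ : ℝ)
    (hk0 : 0 ≤ k) (hk : k ≤ 1 / 2) (hℓ : 1 / 2 ≤ ℓ) (hℓ1 : ℓ ≤ 1) (hC₀ : 0 < C₀)
    (hyp : ∀ X : ℝ, 0 < X → ∀ M M₁ : ℕ, 1 ≤ M → M < M₁ → M₁ ≤ 2 * M →
      ‖∑ m ∈ Finset.Ioc M M₁, e (X / m)‖ ≤
        C₀ * ((X / M) ^ k * (M : ℝ) ^ (ℓ - k) + (M : ℝ) ^ 2 / X)) :
    ∃ C : ℝ, 0 < C ∧ ∀ N N₁ : ℕ, 2 ≤ N → N < N₁ → N₁ ≤ 2 * N → ∀ x : ℝ, (N : ℝ) ≤ x →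
      ‖∑ n ∈ Finset.Ioc N N₁, (Nat.totient n : ℂ) * e (x / n)‖ ≤
        C * (x ^ k * (N : ℝ) ^ (1 + ℓ - 2 * k) * Real.log N + (N : ℝ) ^ 3 / x + N) :=
  totient_twisted_exponential_sum_general k ℓ C₀ hk0 hk hℓ hC₀ hyp
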